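/- arXiv:2004.06565 — 4 statements merged into one kernel-verified Lean document; each statement's English description precedes it below -/
import Mathlib

section
/- For m, n positive integers, σ², σ*² > 0 with k := σ*²/σ², α ≠ 0 and λ₀ = 0, the inequality Var(f_BE) ≤ Var(f_GE), i.e. (m·σ² + n·α²·σ*²)/(m + nα²)² ≤ (m·σ² + n·σ*²/α²)/(m+n)², holds if and only if k·(m(α²+1) + 2nα²) ≤ α²·(n(α²+1) + 2m). -/
/-!
Clearing the (positive) denominators, the difference `Var(f_GE) - Var(f_BE)` factors as
`m n (α² - 1) / α²` times `α² σ² (n(α² + 1) + 2m) - σ*² (m(α² + 1) + 2nα²)`, so for `α² > 1`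
its sign is that of the second factor.
-/

lemma greedy_mul_sub_bayes_mul (m n σ2 σs2 a : ℝ) (ha : a ≠ 0) :
    (m * σ2 + n * σs2 / a) * (m + n * a) ^ 2 - (m * σ2 + n * a * σs2) * (m + n) ^ 2 =
      m * n * (a - 1) / a *
        (a * σ2 * (n * (a + 1) + 2 * m) - σs2 * (m * (a + 1) + 2 * n * a)) := by
  field_simp
  ring

lemma bayes_le_greedy_iff {m n a : ℝ} (hm : 0 < m) (hn : 0 < n) (ha : 1 < a) (σ2 σs2 : ℝ) :
    (m * σ2 + n * a * σs2) / (m + n * a) ^ 2 ≤ (m * σ2 + n * σs2 / a) / (m + n) ^ 2 ↔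
      σs2 * (m * (a + 1) + 2 * n * a) ≤ a * σ2 * (n * (a + 1) + 2 * m) := by
  have hc : 0 < m * n * (a - 1) / a := by
    have : 0 < a - 1 := by linarith
    positivity
  rw [div_le_div_iff₀ (by positivity) (by positivity), ← sub_nonneg,
    greedy_mul_sub_bayes_mul m n σ2 σs2 a (by positivity), mul_nonneg_iff_of_pos_left hc,
    sub_nonneg]

theorem stmt_12_general (m n : ℕ) (hm : 0 < m) (hn : 0 < n)
    (σ2 σs2 α k : ℝ) (hσ2 : 0 < σ2)
    (hk : k = σs2 / σ2) (hα : 1 < α ^ 2) :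
    ((m : ℝ) * σ2 + n * α ^ 2 * σs2) / ((m : ℝ) + n * α ^ 2) ^ 2 ≤
      ((m : ℝ) * σ2 + n * σs2 / α ^ 2) / ((m : ℝ) + n) ^ 2 ↔
      k * ((m : ℝ) * (α ^ 2 + 1) + 2 * n * α ^ 2) ≤
        α ^ 2 * ((n : ℝ) * (α ^ 2 + 1) + 2 * m) := by
  rw [bayes_le_greedy_iff (Nat.cast_pos.mpr hm) (Nat.cast_pos.mpr hn) hα, hk,
    div_mul_eq_mul_div, div_le_iff₀ hσ2, mul_right_comm (α ^ 2) σ2]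

/-- Bayesian (λ₀ = 0) vs greedy variance comparison: for α² > 1,
`Var(f_BE) ≤ Var(f_GE)` iff `k·(m(α²+1) + 2nα²) ≤ α²·(n(α²+1) + 2m)`
where `k = σ*²/σ²`. -/
theorem stmt_12 (m n : ℕ) (hm : 0 < m) (hn : 0 < n)
    (σ2 σs2 α k : ℝ) (hσ2 : 0 < σ2) (hσs2 : 0 < σs2)
    (hk : k = σs2 / σ2) (hα : 1 < α ^ 2) :
    ((m : ℝ) * σ2 + n * α ^ 2 * σs2) / ((m : ℝ) + n * α ^ 2) ^ 2 ≤
      ((m : ℝ) * σ2 + n * σs2 / α ^ 2) / ((m : ℝ) + n) ^ 2 ↔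
      k * ((m : ℝ) * (α ^ 2 + 1) + 2 * n * α ^ 2) ≤
        α ^ 2 * ((n : ℝ) * (α ^ 2 + 1) + 2 * m) :=
  stmt_12_general m n hm hn σ2 σs2 α k hσ2 hk hα
end

section
/- If σ*²/σ² ≤ 2 and α² > 3/2 + sqrt(9/4 + 2m/n), then the Bayesian estimator (with λ₀ = 0) has variance at most that of the greedy estimator: (m·σ² + n·α²·σ*²)/(m + nα²)² ≤ (m·σ² + n·σ*²/α²)/(m+n)². -/
/-- If `σ*²/σ² ≤ 2` and `α² > 3/2 + √(9/4 + 2m/n)`, then the Bayesian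
estimator (λ₀ = 0) has variance at most that of the greedy estimator. -/
theorem stmt_13 (m n : ℕ) (hm : 0 < m) (hn : 0 < n)
    (σ2 σs2 α : ℝ) (hσ2 : 0 < σ2) (hσs2 : 0 < σs2)
    (hk : σs2 / σ2 ≤ 2)
    (hα : α ^ 2 > 3 / 2 + Real.sqrt (9 / 4 + 2 * m / n)) :
    ((m : ℝ) * σ2 + n * α ^ 2 * σs2) / ((m : ℝ) + n * α ^ 2) ^ 2 ≤
      ((m : ℝ) * σ2 + n * σs2 / α ^ 2) / ((m : ℝ) + n) ^ 2 := by
  have hm' : (0:ℝ) < m := by exact_mod_cast hm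
  have hn' : (0:ℝ) < n := by exact_mod_cast hn
  set A := α ^ 2 with hAdef
  have hs : Real.sqrt (9 / 4 + 2 * m / n) ≥ 3 / 2 := by
    nlinarith [Real.sq_sqrt (show (0:ℝ) ≤ 9/4 + 2*m/n by positivity),
      Real.sqrt_nonneg (9/4 + 2*(m:ℝ)/n), div_nonneg (show (0:ℝ) ≤ 2*m by positivity) hn'.le]
  have hA3 : A > 3 := by linarith
  have hkey : (n:ℝ) * A ^ 2 - 3 * n * A - 2 * m > 0 := by
    have hsq : (A - 3/2) ^ 2 > 9/4 + 2 * m / n := by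
      have h1 : A - 3/2 > Real.sqrt (9/4 + 2*m/n) := by linarith
      have h2 : Real.sqrt (9/4 + 2*m/n) ^ 2 = 9/4 + 2*m/n := Real.sq_sqrt (by positivity)
      nlinarith [Real.sqrt_nonneg (9/4 + 2*(m:ℝ)/n), div_nonneg (show (0:ℝ) ≤ 2*m by positivity) hn'.le]
    have := (div_lt_iff₀ hn').mp (by nlinarith : 2*(m:ℝ)/n < A^2 - 3*A)
    nlinarith
  have ht : σs2 ≤ 2 * σ2 := by
    have := (div_le_iff₀ hσ2).mp hk; linarith
  have hA0 : (0:ℝ) < A := by linarith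
  have hrw : (m:ℝ) * σ2 + n * σs2 / A = (A * m * σ2 + n * σs2) / A := by
    field_simp
  rw [hrw, div_div]
  rw [div_le_div_iff₀ (by positivity) (by positivity)]
  nlinarith [mul_nonneg (mul_nonneg (mul_nonneg hm'.le hn'.le) (by linarith : (0:ℝ) ≤ A - 1)) (mul_nonneg hσ2.le hkey.le),
    mul_nonneg (mul_nonneg (mul_nonneg hm'.le hn'.le) (by linarith : (0:ℝ) ≤ A - 1)) (mul_nonneg (by linarith : (0:ℝ) ≤ 2*σ2 - σs2) (by nlinarith : (0:ℝ) ≤ m*(A+1) + 2*n*A))]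
end

section
/- For any positive reals m, n, there exists α with |α| > 1 such that whenever σ² , σ*² > 0 satisfy σ*²/σ² ≤ 2, the Bayesian estimator (λ₀ = 0) satisfies (m·σ² + n·α²·σ*²)/(m + nα²)² ≤ (m·σ² + n·σ*²/α²)/(m+n)². -/
/-!
Bounding `σ*²` by `2σ²` on the left and dropping the `σ*²` term on the right reduces the
claim to the polynomial inequality `(m + n)² (m + 2nt) ≤ m (m + nt)²` in `t = α²`. Its
right-hand side has leading term `m n² t²`, so it holds as soon as `t ≥ 1` and
`m n² t ≥ (m + n)² (m + 2n)`.
-/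

lemma sq_add_mul_le_of_le_mul {m n t : ℝ} (hm : 0 < m) (hn : 0 ≤ n) (ht : 1 ≤ t)
    (hK : (m + n) ^ 2 * (m + 2 * n) ≤ m * n ^ 2 * t) :
    (m + n) ^ 2 * (m + 2 * n * t) ≤ m * (m + n * t) ^ 2 := by
  have hKt : (m + n) ^ 2 * (m + 2 * n) * t ≤ m * n ^ 2 * t * t :=
    mul_le_mul_of_nonneg_right hK (by linarith)
  have ht0 : 0 ≤ t := by linarith
  nlinarith [mul_le_mul_of_nonneg_left ht (by positivity : 0 ≤ m * (m + n) ^ 2),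
    pow_pos hm 3, mul_nonneg (mul_nonneg (sq_nonneg m) hn) ht0]

lemma variance_le_of_sq_add_mul {m n t σ2 σs2 : ℝ} (hm : 0 < m) (hn : 0 ≤ n) (ht : 0 < t)
    (hσs2 : 0 ≤ σs2) (hσ : σs2 ≤ 2 * σ2)
    (hpoly : (m + n) ^ 2 * (m + 2 * n * t) ≤ m * (m + n * t) ^ 2) :
    (m * σ2 + n * t * σs2) / (m + n * t) ^ 2 ≤ (m * σ2 + n * σs2 / t) / (m + n) ^ 2 := by
  have hσ2 : 0 ≤ σ2 := by linarith
  calc (m * σ2 + n * t * σs2) / (m + n * t) ^ 2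
      ≤ σ2 * (m + 2 * n * t) / (m + n * t) ^ 2 := by
        gcongr
        nlinarith [mul_le_mul_of_nonneg_left hσ (by positivity : 0 ≤ n * t)]
    _ ≤ m * σ2 / (m + n) ^ 2 := by
        rw [div_le_div_iff₀ (by positivity) (by positivity)]
        nlinarith [mul_le_mul_of_nonneg_left hpoly hσ2]
    _ ≤ (m * σ2 + n * σs2 / t) / (m + n) ^ 2 := by
        gcongr
        exact le_add_of_nonneg_right (by positivity)

/-- For any positive reals m, n there exists α with |α| > 1 such that, whenever
`σ*²/σ² ≤ 2`, `Var(f_BE) ≤ Var(f_GE)`. -/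
theorem stmt_14 (m n : ℝ) (hm : 0 < m) (hn : 0 < n) :
    ∃ α : ℝ, 1 < |α| ∧ ∀ σ2 σs2 : ℝ, 0 < σ2 → 0 < σs2 → σs2 / σ2 ≤ 2 →
      (m * σ2 + n * α ^ 2 * σs2) / (m + n * α ^ 2) ^ 2 ≤
        (m * σ2 + n * σs2 / α ^ 2) / (m + n) ^ 2 := by
  set K := (m + n) ^ 2 * (m + 2 * n) / (m * n ^ 2)
  have hK : 0 < K := by positivity
  refine ⟨1 + K, by rw [abs_of_pos (by linarith)]; linarith, ?_⟩
  intro σ2 σs2 hσ2 hσs2 hratio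
  have hα : 1 + K ≤ (1 + K) ^ 2 := by nlinarith
  have hpoly := sq_add_mul_le_of_le_mul hm hn.le (t := (1 + K) ^ 2) (by nlinarith) <| by
    calc (m + n) ^ 2 * (m + 2 * n) = m * n ^ 2 * K := by simp only [K]; field_simp
      _ ≤ m * n ^ 2 * (1 + K) ^ 2 := by gcongr; linarith
  exact variance_le_of_sq_add_mul hm hn.le (by positivity) hσs2.le
    (by rw [div_le_iff₀ hσ2] at hratio; linarith) hpoly
end

section
/- For positive reals m, n, σ², σ*², α with α² > 1 and σ*²/σ² ≤ 2, the variance of the Bayesian estimator with λ₀ = 0 is strictly smaller than the variance of the naive estimator: (m·σ² + n·α²·σ*²)/(m + nα²)² < (m·σ² + n·σ*²)/(m+n)². -/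
/-- For α² > 1 and σ*²/σ² ≤ 2, the Bayesian (λ₀ = 0) estimator has strictly
smaller variance than the naive estimator. -/
theorem stmt_15 (m n σ2 σs2 α : ℝ) (hm : 0 < m) (hn : 0 < n)
    (hσ2 : 0 < σ2) (hσs2 : 0 < σs2) (hk : σs2 / σ2 ≤ 2) (hα : 1 < α ^ 2) :
    (m * σ2 + n * α ^ 2 * σs2) / (m + n * α ^ 2) ^ 2 <
      (m * σ2 + n * σs2) / (m + n) ^ 2 := by
  have hk' : σs2 ≤ 2 * σ2 := by
    rw [div_le_iff₀ hσ2] at hk; linarith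
  set a := α ^ 2 with ha
  have hna : 0 < n * a := by nlinarith
  have h1 : (0:ℝ) < (m + n) ^ 2 := by positivity
  have h2 : (0:ℝ) < (m + n * a) ^ 2 := by nlinarith
  rw [div_lt_div_iff₀ h2 h1]
  have ha1 : 0 < a - 1 := by linarith
  have h4 : 0 < (a - 1) * (m * σ2) * (2 * m * n + n ^ 2 * (a + 1)) := by positivity
  rcases le_or_gt (m ^ 2) (n ^ 2 * a) with h | h
  · nlinarith [h4, mul_nonneg (mul_nonneg ha1.le (mul_pos hn hσs2).le) (sub_nonneg.2 h)]
  · nlinarith [h4,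
      mul_nonneg (mul_nonneg (mul_pos ha1 hn).le (by linarith : (0:ℝ) ≤ 2 * σ2 - σs2)) (sub_pos.2 h).le,
      mul_pos (mul_pos hσ2 ha1) (mul_pos hn (by positivity : (0:ℝ) < m * n * (a + 1) + 2 * n ^ 2 * a))]
end
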